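/- arXiv:1602.03578 — 3 statements merged into one kernel-verified Lean document; each statement's English description precedes it below -/
import Mathlib

section
/- (Equation (3.5).) With γ_0 and γ_j as in the context, for all integers j ≥ 0 and k ≥ 0 one has |γ_j^k / k!| = p^{−E(j,k)}, where E(j,k) = k·(p^j + p^{j−1} + ⋯ + p − j) + s_k/(p−1) (the sum p^j + ⋯ + p equals (p^{j+1} − p)/(p−1), and is 0 when j = 0). -/
/-!
Because `∑ᵢ γ₀^{pⁱ}/pⁱ = 0`, the partial sum `γ_j` is minus the tail `∑_{i>j} γ₀^{pⁱ}/pⁱ`.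
The `i`-th term has absolute value `p^{i - pⁱ/(p-1)}`, and these exponents strictly decrease
for `i ≥ 1`, so in the ultrametric field `K` the first term of the tail dominates:
`|γ_j| = p^{(j+1) - p^{j+1}/(p-1)}`. For the factorial, integers prime to `p` have absolute
value `1` (Bézout), so `|k!| = p^{-v_p(k!)}`, and Legendre's formula gives
`v_p(k!) = (k - s_k)/(p-1)`.
-/

namespace IsUltrametricDist

variable {K : Type*} [NormedField K] [IsUltrametricDist K] {p : ℕ}

lemma norm_natCast_eq_one_of_not_dvd (hp : p.Prime) (hpnorm : ‖(p : K)‖ < 1) {m : ℕ}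
    (hm : ¬ p ∣ m) : ‖(m : K)‖ = 1 := by
  obtain ⟨a, b, hab⟩ : IsCoprime (p : ℤ) m :=
    Nat.isCoprime_iff_coprime.mpr ((hp.coprime_iff_not_dvd).mpr hm)
  have hpa : ‖(a * p : K)‖ < 1 := by
    rw [norm_mul]
    exact mul_lt_one_of_nonneg_of_lt_one_right (norm_intCast_le_one K a) (norm_nonneg _) hpnorm
  have hbezout : (a * p + b * m : K) = 1 := by exact_mod_cast congrArg (Int.cast : ℤ → K) hab
  have hsum : (1 : ℝ) ≤ max ‖(a * p : K)‖ ‖(b * m : K)‖ := by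
    simpa [hbezout] using norm_add_le_max (a * p : K) (b * m)
  have hbm : 1 ≤ ‖(b : K)‖ * ‖(m : K)‖ := by
    simpa only [norm_mul] using (le_max_iff.mp hsum).resolve_left hpa.not_ge
  exact le_antisymm (norm_natCast_le_one K m)
    (hbm.trans (mul_le_of_le_one_left (norm_nonneg _) (norm_intCast_le_one K b)))

lemma norm_natCast_eq_pow_padicValNat (hp : p.Prime) (hpnorm : ‖(p : K)‖ < 1) {n : ℕ}
    (hn : n ≠ 0) : ‖(n : K)‖ = ‖(p : K)‖ ^ padicValNat p n := by
  have : Fact p.Prime := ⟨hp⟩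
  obtain ⟨e, m, hpm, rfl⟩ := Nat.exists_eq_pow_mul_and_not_dvd hn p hp.ne_one
  have hm : m ≠ 0 := by rintro rfl; exact hpm (dvd_zero p)
  rw [padicValNat.mul (pow_ne_zero e hp.ne_zero) hm, padicValNat.prime_pow,
    padicValNat.eq_zero_of_not_dvd hpm, add_zero, Nat.cast_mul, norm_mul, Nat.cast_pow, norm_pow,
    norm_natCast_eq_one_of_not_dvd hp hpnorm hpm, mul_one]

lemma norm_tsum_eq_norm_zero_of_strictAnti {E : Type*} [NormedAddCommGroup E] [IsUltrametricDist E]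
    {f : ℕ → E} (hf : Summable f) (hanti : StrictAnti (‖f ·‖)) : ‖∑' i, f i‖ = ‖f 0‖ := by
  have htail : ‖∑' i, f (i + 1)‖ < ‖f 0‖ :=
    (norm_tsum_le_of_forall_le_of_nonneg (norm_nonneg _)
      (fun i => hanti.antitone (Nat.le_add_left 1 i))).trans_lt (hanti Nat.zero_lt_one)
  rw [hf.tsum_eq_zero_add, norm_add_eq_max_of_norm_ne_norm htail.ne', max_eq_left htail.le]

lemma norm_sum_range_eq_of_hasSum_zero {E : Type*} [NormedAddCommGroup E] [IsUltrametricDist E]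
    {f : ℕ → E} (hf : HasSum f 0) (n : ℕ) (hanti : StrictAnti fun i => ‖f (i + n)‖) :
    ‖∑ i ∈ Finset.range n, f i‖ = ‖f n‖ := by
  have htail : ∑ i ∈ Finset.range n, f i = -∑' i, f (i + n) :=
    eq_neg_of_add_eq_zero_left (by rw [hf.summable.sum_add_tsum_nat_add, hf.tsum_eq])
  rw [htail, norm_neg, norm_tsum_eq_norm_zero_of_strictAnti
    ((summable_nat_add_iff n).mpr hf.summable) hanti, zero_add]

end IsUltrametricDist

open IsUltrametricDist

lemma sub_pow_div_sub_one_succ_lt {q : ℝ} (hq : 1 < q) {i : ℕ} (hi : 1 ≤ i) :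
    ((i + 1 : ℕ) : ℝ) - q ^ (i + 1) / (q - 1) < i - q ^ i / (q - 1) := by
  have hsucc : q ^ (i + 1) / (q - 1) = q ^ i / (q - 1) + q ^ i := by
    field_simp [(sub_pos.mpr hq).ne']
    ring
  have hpow : 1 < q ^ i := one_lt_pow₀ hq (by omega)
  push_cast
  linarith

lemma norm_pow_pow_div_pow {K : Type*} [NormedField K] {p : ℕ} (hp : 0 < p)
    (hpnorm : ‖(p : K)‖ = (p : ℝ)⁻¹) {x : K} (hx : ‖x‖ = (p : ℝ) ^ (-(1 : ℝ) / ((p : ℝ) - 1)))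
    (i : ℕ) : ‖x ^ p ^ i / (p : K) ^ i‖ = (p : ℝ) ^ ((i : ℝ) - (p : ℝ) ^ i / ((p : ℝ) - 1)) := by
  have hp0 : (0 : ℝ) < p := Nat.cast_pos.mpr hp
  rw [norm_div, norm_pow, norm_pow, hx, hpnorm, ← Real.rpow_mul_natCast hp0.le, inv_pow,
    div_inv_eq_mul, ← Real.rpow_natCast, ← Real.rpow_add hp0]
  congr 1
  simp only [Real.rpow_natCast]
  push_cast
  ring

lemma norm_factorial_eq_rpow {K : Type*} [NormedField K] [IsUltrametricDist K] {p : ℕ}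
    (hp : p.Prime) (hpnorm : ‖(p : K)‖ = (p : ℝ)⁻¹) (k : ℕ) :
    ‖(k.factorial : K)‖ = (p : ℝ) ^ (-(((k : ℝ) - (Nat.digits p k).sum) / ((p : ℝ) - 1))) := by
  have : Fact p.Prime := ⟨hp⟩
  have hp1 : (1 : ℝ) < p := Nat.one_lt_cast.mpr hp.one_lt
  have hlegendre : ((p : ℝ) - 1) * padicValNat p k.factorial = k - (Nat.digits p k).sum := by
    have h := sub_one_mul_padicValNat_factorial (p := p) k
    rwa [← Nat.cast_inj (R := ℝ), Nat.cast_mul, Nat.cast_sub hp.one_le,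
      Nat.cast_sub (Nat.digit_sum_le p k), Nat.cast_one] at h
  rw [norm_natCast_eq_pow_padicValNat hp (hpnorm ▸ inv_lt_one_of_one_lt₀ hp1) k.factorial_ne_zero,
    hpnorm, ← Real.rpow_natCast, Real.inv_rpow (by positivity), ← Real.rpow_neg (by positivity),
    ← hlegendre, mul_div_cancel_left₀ _ (sub_pos.mpr hp1).ne']

theorem stmt_7_general (p : ℕ) (hp : p.Prime)
    (K : Type*) [NormedField K]
    (hna : ∀ x y : K, ‖x + y‖ ≤ max ‖x‖ ‖y‖)
    (hpnorm : ‖(p : K)‖ = ((p : ℝ))⁻¹)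
    (γ₀ : K) (hγ₀ : ‖γ₀‖ = (p : ℝ) ^ (-(1 : ℝ) / ((p : ℝ) - 1)))
    (hroot : HasSum (fun i : ℕ => γ₀ ^ p ^ i / (p : K) ^ i) 0)
    (γ : ℕ → K) (hγ : ∀ j, γ j = ∑ i ∈ Finset.range (j + 1), γ₀ ^ p ^ i / (p : K) ^ i)
    (s : ℕ → ℕ) (hs : ∀ k, s k = (Nat.digits p k).sum)
    (j k : ℕ) :
    ‖γ j ^ k / (k.factorial : K)‖ =
      (p : ℝ) ^ (-((k : ℝ) * (((p : ℝ) ^ (j + 1) - p) / ((p : ℝ) - 1) - (j : ℝ))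
        + (s k : ℝ) / ((p : ℝ) - 1))) := by
  have : IsUltrametricDist K := isUltrametricDist_of_forall_norm_add_le_max_norm hna
  have hp1 : (1 : ℝ) < p := Nat.one_lt_cast.mpr hp.one_lt
  have hterm := norm_pow_pow_div_pow hp.pos hpnorm hγ₀
  have hγj : ‖γ j‖ = (p : ℝ) ^ (((j + 1 : ℕ) : ℝ) - (p : ℝ) ^ (j + 1) / ((p : ℝ) - 1)) := by
    rw [hγ j, norm_sum_range_eq_of_hasSum_zero hroot (j + 1), hterm]
    refine strictAnti_nat_of_succ_lt fun i => ?_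
    simp only [hterm]
    rw [Real.rpow_lt_rpow_left_iff hp1, show i + 1 + (j + 1) = i + (j + 1) + 1 by ring]
    exact sub_pow_div_sub_one_succ_lt hp1 (by omega)
  rw [norm_div, norm_pow, hγj, norm_factorial_eq_rpow hp hpnorm, ← hs,
    ← Real.rpow_mul_natCast (by positivity), ← Real.rpow_sub (by positivity)]
  congr 1
  field_simp [(sub_pos.mpr hp1).ne']
  push_cast
  ring

/-- Equation (3.5): `|γ_j^k/k!| = p^{−E(j,k)}` with
`E(j,k) = k·((p^{j+1} − p)/(p−1) − j) + s_k/(p−1)`, where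
`(p^{j+1} − p)/(p−1) = p^j + p^{j-1} + ⋯ + p` (equal to `0` when `j = 0`) and
`s_k` is the sum of the base-`p` digits of `k`. -/
theorem stmt_7 (p : ℕ) (hp : p.Prime)
    (K : Type*) [NormedField K] [CompleteSpace K] [CharZero K]
    (hna : ∀ x y : K, ‖x + y‖ ≤ max ‖x‖ ‖y‖)
    (hpnorm : ‖(p : K)‖ = ((p : ℝ))⁻¹)
    (γ₀ : K) (hγ₀ : ‖γ₀‖ = (p : ℝ) ^ (-(1 : ℝ) / ((p : ℝ) - 1)))
    (hroot : HasSum (fun i : ℕ => γ₀ ^ p ^ i / (p : K) ^ i) 0)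
    (γ : ℕ → K) (hγ : ∀ j, γ j = ∑ i ∈ Finset.range (j + 1), γ₀ ^ p ^ i / (p : K) ^ i)
    (s : ℕ → ℕ) (hs : ∀ k, s k = (Nat.digits p k).sum)
    (j k : ℕ) :
    ‖γ j ^ k / (k.factorial : K)‖ =
      (p : ℝ) ^ (-((k : ℝ) * (((p : ℝ) ^ (j + 1) - p) / ((p : ℝ) - 1) - (j : ℝ))
        + (s k : ℝ) / ((p : ℝ) - 1))) :=
  stmt_7_general p hp K hna hpnorm γ₀ hγ₀ hroot γ hγ s hs j k
end

section
/- (Estimate (3.8): p-integrality of the coefficients of θ̂.) With γ_0 and γ_j as in the context, for all integers J ≥ 0 and i ≥ 0, the i-th coefficient of the formal power series ∏_{j=0}^J exp(γ_j t^{p^j}) ∈ K[[t]], namely c_i = Σ ∏_{j=0}^J γ_j^{k_j}/k_j! where the sum is over all (k_0,…,k_J) ∈ ℕ^{J+1} with Σ_{j=0}^J p^j·k_j = i, satisfies |c_i| ≤ p^{−s_i/(p−1)}. (Equivalently: writing θ̂(t) = Σ_i θ̂_i (γ_0 t)^i/i!, one has ord_p θ̂_i ≥ 0.) -/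
/-!
Put `r = p^(-1/(p-1))`, so that `‖p‖ = r^(p-1)`. By Legendre's formula `‖k!‖ = r^(k - s k)`, and
`‖γ₀^(p^n) / p^n‖ = r^(p^n - (p-1)n) ≤ r` by Bernoulli's inequality, so `‖γ_j‖ ≤ r` and
`‖γ_j^k / k!‖ ≤ r^(s k)`. The digit sum is invariant under multiplication by `p` and subadditive
(Legendre again, since `m! n! ∣ (m+n)!`), so every monomial contributing to `c_i` has norm at most
`r^(s i)`, and the ultrametric inequality bounds their sum.
-/

open Finset
open scoped Nat

namespace Nat

theorem digit_sum_add_le {p : ℕ} (hp : p.Prime) (m n : ℕ) :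
    (p.digits (m + n)).sum ≤ (p.digits m).sum + (p.digits n).sum := by
  have := Fact.mk hp
  have hv : padicValNat p (m ! * n !) ≤ padicValNat p (m + n)! :=
    (padicValNat_dvd_iff_le (factorial_ne_zero _)).mp
      (pow_padicValNat_dvd.trans (factorial_mul_factorial_dvd_factorial_add m n))
  rw [padicValNat.mul (factorial_ne_zero m) (factorial_ne_zero n)] at hv
  have hlegendre := Nat.mul_le_mul_left (p - 1) hv
  rw [Nat.mul_add, sub_one_mul_padicValNat_factorial, sub_one_mul_padicValNat_factorial,
    sub_one_mul_padicValNat_factorial] at hlegendre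
  have := digit_sum_le p m
  have := digit_sum_le p n
  have := digit_sum_le p (m + n)
  omega

theorem digit_sum_base_pow_mul {b : ℕ} (hb : 1 < b) (j k : ℕ) :
    (b.digits (b ^ j * k)).sum = (b.digits k).sum := by
  rcases Nat.eq_zero_or_pos k with rfl | hk
  · simp
  · simp [digits_base_pow_mul hb hk]

theorem digit_sum_sum_le {ι : Type*} {p : ℕ} (hp : p.Prime) (t : Finset ι) (f : ι → ℕ) :
    (p.digits (∑ j ∈ t, f j)).sum ≤ ∑ j ∈ t, (p.digits (f j)).sum := by
  classical
  induction t using Finset.induction_on with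
  | empty => simp
  | insert a t ha ih =>
    rw [sum_insert ha, sum_insert ha]
    exact (digit_sum_add_le hp _ _).trans (Nat.add_le_add_left ih _)

end Nat

section NormedField

variable {K : Type*} [NormedField K] {p : ℕ} {r : ℝ}

theorem norm_pow_pow_div_pow_le (hp : 1 ≤ p) (hr0 : 0 < r) (hr1 : r ≤ 1)
    (hr : ‖(p : K)‖ = r ^ (p - 1)) {x : K} (hx : ‖x‖ ≤ r) (n : ℕ) :
    ‖x ^ p ^ n / (p : K) ^ n‖ ≤ r := by
  have hbernoulli : 1 + n * (p - 1) ≤ p ^ n := by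
    zify [hp]
    exact one_add_mul_sub_le_pow (by omega) n
  rw [norm_div, norm_pow, norm_pow, hr, div_le_iff₀ (by positivity), ← pow_mul]
  calc ‖x‖ ^ p ^ n ≤ r ^ p ^ n := pow_le_pow_left₀ (norm_nonneg x) hx _
    _ ≤ r ^ ((p - 1) * n + 1) := pow_le_pow_of_le_one hr0.le hr1 (by lia)
    _ = r * r ^ ((p - 1) * n) := pow_succ' r _

variable [IsUltrametricDist K]

theorem norm_natCast_eq_one_of_not_dvd (hp : p.Prime) (hpK : ‖(p : K)‖ < 1) {n : ℕ}
    (hn : ¬ p ∣ n) : ‖(n : K)‖ = 1 := by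
  refine le_antisymm (IsUltrametricDist.norm_natCast_le_one K n) ?_
  have hbez : (1 : K) = p * (p.gcdA n : K) + n * (p.gcdB n : K) := by
    have h := congrArg (Int.cast (R := K)) (Nat.gcd_eq_gcd_ab p n)
    rw [((hp.coprime_iff_not_dvd).mpr hn).gcd_eq_one] at h
    push_cast at h
    exact h
  have hpa : ‖(p : K) * (p.gcdA n : K)‖ < 1 := by
    rw [norm_mul]
    exact mul_lt_one_of_nonneg_of_lt_one_left (norm_nonneg _) hpK
      (IsUltrametricDist.norm_intCast_le_one K _)
  have hnb : 1 ≤ ‖(n : K) * (p.gcdB n : K)‖ := by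
    have h := IsUltrametricDist.norm_add_le_max ((p : K) * p.gcdA n) (n * p.gcdB n)
    rw [← hbez, norm_one] at h
    exact (le_max_iff.mp h).resolve_left hpa.not_ge
  rw [norm_mul] at hnb
  calc 1 ≤ ‖(n : K)‖ * ‖(p.gcdB n : K)‖ := hnb
    _ ≤ ‖(n : K)‖ := mul_le_of_le_one_right (norm_nonneg _)
      (IsUltrametricDist.norm_intCast_le_one K _)

theorem norm_natCast_eq_pow_padicValNat (hp : p.Prime) (hpK : ‖(p : K)‖ < 1) {n : ℕ}
    (hn : n ≠ 0) : ‖(n : K)‖ = ‖(p : K)‖ ^ padicValNat p n := by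
  conv_lhs => rw [← Nat.ordProj_mul_ordCompl_eq_self n p]
  rw [Nat.cast_mul, norm_mul, norm_natCast_eq_one_of_not_dvd hp hpK (Nat.not_dvd_ordCompl hp hn),
    mul_one, Nat.cast_pow, norm_pow, Nat.factorization_def n hp]

theorem norm_factorial_eq_pow_sub_digit_sum (hp : p.Prime) (hr0 : 0 ≤ r) (hr1 : r < 1)
    (hr : ‖(p : K)‖ = r ^ (p - 1)) (k : ℕ) :
    ‖(k ! : K)‖ = r ^ (k - (p.digits k).sum) := by
  have := Fact.mk hp
  have hpK : ‖(p : K)‖ < 1 := hr ▸ pow_lt_one₀ hr0 hr1 (Nat.sub_ne_zero_of_lt hp.one_lt)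
  rw [norm_natCast_eq_pow_padicValNat hp hpK k.factorial_ne_zero, hr, ← pow_mul,
    sub_one_mul_padicValNat_factorial]

theorem norm_pow_div_factorial_le (hp : p.Prime) (hr0 : 0 < r) (hr1 : r < 1)
    (hr : ‖(p : K)‖ = r ^ (p - 1)) {x : K} (hx : ‖x‖ ≤ r) (k : ℕ) :
    ‖x ^ k / (k ! : K)‖ ≤ r ^ (p.digits k).sum := by
  rw [norm_div, norm_pow, norm_factorial_eq_pow_sub_digit_sum hp hr0.le hr1 hr,
    div_le_iff₀ (by positivity), ← pow_add, Nat.add_sub_cancel' (Nat.digit_sum_le p k)]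
  exact pow_le_pow_left₀ (norm_nonneg x) hx k

theorem norm_prod_pow_div_factorial_le {ι : Type*} (hp : p.Prime) (hr0 : 0 < r) (hr1 : r < 1)
    (hr : ‖(p : K)‖ = r ^ (p - 1)) (t : Finset ι) {y : ι → K} (hy : ∀ j ∈ t, ‖y j‖ ≤ r)
    (e k : ι → ℕ) :
    ‖∏ j ∈ t, y j ^ k j / ((k j)! : K)‖ ≤ r ^ (p.digits (∑ j ∈ t, p ^ e j * k j)).sum := by
  have hdigits : (p.digits (∑ j ∈ t, p ^ e j * k j)).sum ≤ ∑ j ∈ t, (p.digits (k j)).sum := by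
    simpa only [Nat.digit_sum_base_pow_mul hp.one_lt] using
      Nat.digit_sum_sum_le hp t fun j ↦ p ^ e j * k j
  calc ‖∏ j ∈ t, y j ^ k j / ((k j)! : K)‖
        = ∏ j ∈ t, ‖y j ^ k j / ((k j)! : K)‖ := norm_prod _ _
    _ ≤ ∏ j ∈ t, r ^ (p.digits (k j)).sum := prod_le_prod (fun _ _ ↦ norm_nonneg _)
      fun j hj ↦ norm_pow_div_factorial_le hp hr0 hr1 hr (hy j hj) _
    _ = r ^ ∑ j ∈ t, (p.digits (k j)).sum := prod_pow_eq_pow_sum _ _ _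
    _ ≤ r ^ (p.digits (∑ j ∈ t, p ^ e j * k j)).sum := pow_le_pow_of_le_one hr0.le hr1.le hdigits

end NormedField

theorem stmt_11_general (p : ℕ) (hp : p.Prime)
    (K : Type*) [NormedField K]
    (hna : ∀ x y : K, ‖x + y‖ ≤ max ‖x‖ ‖y‖)
    (hpnorm : ‖(p : K)‖ = ((p : ℝ))⁻¹)
    (γ₀ : K) (hγ₀ : ‖γ₀‖ = (p : ℝ) ^ (-(1 : ℝ) / ((p : ℝ) - 1)))
    (γ : ℕ → K) (hγ : ∀ j, γ j = ∑ i ∈ Finset.range (j + 1), γ₀ ^ p ^ i / (p : K) ^ i)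
    (s : ℕ → ℕ) (hs : ∀ k, s k = (Nat.digits p k).sum)
    (J i : ℕ) (c : K)
    (hc : c = ∑ k : Fin (J + 1) → Fin (i + 1),
      if ∑ j : Fin (J + 1), p ^ (j : ℕ) * (k j : ℕ) = i
      then ∏ j : Fin (J + 1), γ (j : ℕ) ^ (k j : ℕ) / (((k j : ℕ).factorial : ℕ) : K)
      else 0) :
    ‖c‖ ≤ (p : ℝ) ^ (-((s i : ℝ) / ((p : ℝ) - 1))) := by
  have := IsUltrametricDist.isUltrametricDist_of_forall_norm_add_le_max_norm hna
  set r : ℝ := (p : ℝ) ^ (-(1 : ℝ) / ((p : ℝ) - 1))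
  have hp1 : (1 : ℝ) < p := by exact_mod_cast hp.one_lt
  have hr0 : 0 < r := by positivity
  have hr1 : r < 1 :=
    Real.rpow_lt_one_of_one_lt_of_neg hp1 (div_neg_of_neg_of_pos (by norm_num) (by linarith))
  have hr_pow (m : ℕ) : r ^ m = (p : ℝ) ^ (-((m : ℝ) / ((p : ℝ) - 1))) := by
    rw [← Real.rpow_natCast, ← Real.rpow_mul (by positivity)]
    ring_nf
  have hr : ‖(p : K)‖ = r ^ (p - 1) := by
    rw [hr_pow, Nat.cast_sub hp.one_le, Nat.cast_one, div_self (by linarith), Real.rpow_neg_one,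
      hpnorm]
  have hγr (j : ℕ) : ‖γ j‖ ≤ r := hγ j ▸ IsUltrametricDist.norm_sum_le_of_forall_le_of_nonneg
    hr0.le fun n _ ↦ norm_pow_pow_div_pow_le hp.one_le hr0 hr1.le hr hγ₀.le n
  rw [← hr_pow, hc]
  refine IsUltrametricDist.norm_sum_le_of_forall_le_of_nonneg (by positivity) fun k _ ↦ ?_
  split_ifs with hk
  · simpa only [hs, hk] using norm_prod_pow_div_factorial_le hp hr0 hr1 hr univ
      (y := fun j : Fin (J + 1) ↦ γ j) (fun j _ ↦ hγr j) (fun j ↦ j) (fun j ↦ k j)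
  · simpa only [norm_zero] using pow_nonneg hr0.le _

/-- Estimate (3.8): the `i`-th coefficient `c_i` of `∏_{j=0}^J exp(γ_j t^{p^j})`,
namely `c_i = Σ ∏_{j=0}^J γ_j^{k_j}/k_j!` over all `(k_0,…,k_J) ∈ ℕ^{J+1}` with
`Σ_j p^j k_j = i` (each such `k_j` satisfies `k_j ≤ i`, so the sum may be taken over
`k_j ∈ {0,…,i}`), satisfies `|c_i| ≤ p^{−s_i/(p−1)}`; equivalently, writing
`θ̂(t) = Σ_i θ̂_i (γ₀ t)^i/i!`, one has `ord_p θ̂_i ≥ 0`. -/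
theorem stmt_11 (p : ℕ) (hp : p.Prime)
    (K : Type*) [NormedField K] [CompleteSpace K] [CharZero K]
    (hna : ∀ x y : K, ‖x + y‖ ≤ max ‖x‖ ‖y‖)
    (hpnorm : ‖(p : K)‖ = ((p : ℝ))⁻¹)
    (γ₀ : K) (hγ₀ : ‖γ₀‖ = (p : ℝ) ^ (-(1 : ℝ) / ((p : ℝ) - 1)))
    (hroot : HasSum (fun i : ℕ => γ₀ ^ p ^ i / (p : K) ^ i) 0)
    (γ : ℕ → K) (hγ : ∀ j, γ j = ∑ i ∈ Finset.range (j + 1), γ₀ ^ p ^ i / (p : K) ^ i)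
    (s : ℕ → ℕ) (hs : ∀ k, s k = (Nat.digits p k).sum)
    (J i : ℕ) (c : K)
    (hc : c = ∑ k : Fin (J + 1) → Fin (i + 1),
      if ∑ j : Fin (J + 1), p ^ (j : ℕ) * (k j : ℕ) = i
      then ∏ j : Fin (J + 1), γ (j : ℕ) ^ (k j : ℕ) / (((k j : ℕ).factorial : ℕ) : K)
      else 0) :
    ‖c‖ ≤ (p : ℝ) ^ (-((s i : ℝ) / ((p : ℝ) - 1))) :=
  stmt_11_general p hp K hna hpnorm γ₀ hγ₀ γ hγ s hs J i c hc
end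

section
/- (Scalar core of Lemma 5.7.) With γ_0 as in the context, for every integer μ ≥ 0 one has |γ_0^{(p−1)(μ+1)} − (−p)^{μ+1}| ≤ p^{−(μ+2)}; that is, γ_0^{(p−1)(μ+1)} ≡ (−p)^{μ+1} modulo elements of absolute value at most p^{−(μ+2)}. (This gives the congruence (−p)^{μ+1}H(Λ) ≡ θ_{−(p−1)b}(Λ) mod p^{μ+2} coefficient by coefficient.) -/
/-!
Put `a = γ₀ ^ (p - 1)`, so `‖a‖ = p⁻¹`. The first two terms of `∑ γ₀ ^ p ^ i / p ^ i = 0` add up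
to `(γ₀ / p) (a + p)`, while `γ₀ ^ p ^ i = γ₀ a ^ (1 + p + ⋯ + p ^ (i - 1))` shows that every later
term has norm at most `‖γ₀‖ p⁻¹`. Hence `a ≡ -p` modulo `p⁻²`, and in an ultrametric ring raising
two elements of norm `≤ p⁻¹` that agree modulo `p⁻²` to the power `μ + 1` makes them agree modulo
`p⁻¹ ^ μ * p⁻²`.
-/

open Finset

theorem norm_pow_succ_sub_pow_succ_le {R : Type*} [SeminormedRing R] [IsUltrametricDist R]
    {a b : R} {r s : ℝ} (ha : ‖a‖ ≤ r) (hb : ‖b‖ ≤ r) (hab : ‖a - b‖ ≤ s) (n : ℕ) :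
    ‖a ^ (n + 1) - b ^ (n + 1)‖ ≤ r ^ n * s := by
  have hr : 0 ≤ r := (norm_nonneg a).trans ha
  have hs : 0 ≤ s := (norm_nonneg _).trans hab
  induction n with
  | zero => simpa using hab
  | succ n ih =>
    have hsplit : a ^ (n + 2) - b ^ (n + 2)
        = a ^ (n + 1) * (a - b) + (a ^ (n + 1) - b ^ (n + 1)) * b := by
      rw [pow_succ a (n + 1), pow_succ b (n + 1)]
      noncomm_ring
    rw [hsplit]
    refine (IsUltrametricDist.norm_add_le_max _ _).trans (max_le ?_ ?_)
    · calc ‖a ^ (n + 1) * (a - b)‖ ≤ ‖a‖ ^ (n + 1) * ‖a - b‖ :=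
            (norm_mul_le _ _).trans <| by gcongr; exact norm_pow_le' a n.succ_pos
        _ ≤ r ^ (n + 1) * s := by gcongr
    · calc ‖(a ^ (n + 1) - b ^ (n + 1)) * b‖ ≤ r ^ n * s * r :=
            (norm_mul_le _ _).trans <| by gcongr
        _ = r ^ (n + 1) * s := by ring

theorem pow_pow_eq_mul_pow_geom_sum {M : Type*} [Monoid M] (x : M) {p : ℕ} (hp : 1 ≤ p)
    (i : ℕ) : x ^ p ^ i = x * (x ^ (p - 1)) ^ ∑ t ∈ range i, p ^ t := by
  obtain ⟨q, rfl⟩ : ∃ q, p = q + 1 := ⟨p - 1, by omega⟩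
  rw [Nat.add_sub_cancel, ← pow_mul, ← pow_succ', ← geom_sum_mul_add q i, mul_comm q]

theorem add_three_le_geom_sum {p : ℕ} (hp : 2 ≤ p) (i : ℕ) :
    i + 3 ≤ ∑ t ∈ range (i + 2), p ^ t := by
  induction i with
  | zero =>
    simp only [zero_add, sum_range_succ, range_one, sum_singleton, pow_zero, pow_one]
    omega
  | succ n ih =>
    rw [sum_range_succ]
    have := Nat.one_le_pow (n + 2) p (by omega)
    omega

theorem rpow_neg_one_div_sub_one_pow {x : ℝ} (hx : 0 ≤ x) {n : ℕ} (hn : 2 ≤ n) :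
    (x ^ (-1 / ((n : ℝ) - 1))) ^ (n - 1) = x⁻¹ := by
  have hcast : ((n : ℝ) - 1) = ((n - 1 : ℕ) : ℝ) := by
    rw [Nat.cast_sub (by omega), Nat.cast_one]
  rw [hcast, neg_div, one_div, Real.rpow_neg hx, inv_pow,
    Real.rpow_inv_natCast_pow hx (by omega)]

section Tail

variable {K : Type*} [NormedField K] {p : ℕ} {γ : K}

theorem norm_pow_pow_div_pow_le_s12 (hp : 2 ≤ p) (hpnorm : ‖(p : K)‖ = (p : ℝ)⁻¹)
    (hγ : ‖γ‖ ^ (p - 1) = (p : ℝ)⁻¹) (i : ℕ) :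
    ‖γ ^ p ^ (i + 2) / (p : K) ^ (i + 2)‖ ≤ ‖γ‖ * (p : ℝ)⁻¹ := by
  have hq0 : (0 : ℝ) < (p : ℝ)⁻¹ := by positivity
  have hq1 : (p : ℝ)⁻¹ ≤ 1 := inv_le_one_of_one_le₀ (by exact_mod_cast (by omega : 1 ≤ p))
  rw [norm_div, norm_pow, norm_pow, pow_pow_eq_mul_pow_geom_sum _ (by omega), hγ, hpnorm,
    mul_div_assoc]
  gcongr
  rw [div_le_iff₀ (by positivity), ← pow_succ']
  exact pow_le_pow_of_le_one hq0.le hq1 (add_three_le_geom_sum hp i)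

theorem norm_pow_sub_one_add_le [IsUltrametricDist K] (hp : 2 ≤ p)
    (hpnorm : ‖(p : K)‖ = (p : ℝ)⁻¹) (hγ : ‖γ‖ ^ (p - 1) = (p : ℝ)⁻¹)
    (hroot : HasSum (fun i : ℕ => γ ^ p ^ i / (p : K) ^ i) 0) :
    ‖γ ^ (p - 1) + p‖ ≤ ((p : ℝ) ^ 2)⁻¹ := by
  have hp0 : (0 : ℝ) < p := by positivity
  have hγ0 : 0 < ‖γ‖ := by
    refine (norm_nonneg γ).lt_of_ne fun h => ?_
    rw [← h, zero_pow (by omega)] at hγ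
    exact (inv_pos.2 hp0).ne hγ
  have hpK : (p : K) ≠ 0 := norm_ne_zero_iff.1 (by rw [hpnorm]; positivity)
  have hγp : γ ^ p = γ * γ ^ (p - 1) := by rw [← pow_succ', Nat.sub_add_cancel (by omega)]
  have htail := ((hasSum_nat_add_iff' 2).2 hroot).tsum_eq
  rw [sum_range_succ, sum_range_one, zero_sub] at htail
  have hhead : γ + γ ^ p / p = γ / p * (γ ^ (p - 1) + p) := by
    rw [hγp]; field_simp; ring
  have hbound : ‖γ‖ * p * ‖γ ^ (p - 1) + p‖ ≤ ‖γ‖ * (p : ℝ)⁻¹ := by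
    calc ‖γ‖ * p * ‖γ ^ (p - 1) + p‖ = ‖∑' i, γ ^ p ^ (i + 2) / (p : K) ^ (i + 2)‖ := by
          rw [htail, norm_neg]; simp [hhead, hpnorm]
      _ ≤ ‖γ‖ * (p : ℝ)⁻¹ :=
          IsUltrametricDist.norm_tsum_le_of_forall_le_of_nonneg (by positivity)
            (norm_pow_pow_div_pow_le_s12 hp hpnorm hγ)
  rw [mul_assoc] at hbound
  rw [sq, mul_inv, ← div_eq_mul_inv, le_div_iff₀' hp0]
  exact le_of_mul_le_mul_left hbound hγ0

end Tail

theorem stmt_12_general (p : ℕ) (hp : p.Prime)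
    (K : Type*) [NormedField K]
    (hna : ∀ x y : K, ‖x + y‖ ≤ max ‖x‖ ‖y‖)
    (hpnorm : ‖(p : K)‖ = ((p : ℝ))⁻¹)
    (γ₀ : K) (hγ₀ : ‖γ₀‖ = (p : ℝ) ^ (-(1 : ℝ) / ((p : ℝ) - 1)))
    (hroot : HasSum (fun i : ℕ => γ₀ ^ p ^ i / (p : K) ^ i) 0)
    (μ : ℕ) :
    ‖γ₀ ^ ((p - 1) * (μ + 1)) - (-(p : K)) ^ (μ + 1)‖ ≤ ((p : ℝ) ^ (μ + 2))⁻¹ := by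
  have : IsUltrametricDist K :=
    IsUltrametricDist.isUltrametricDist_of_forall_norm_add_le_max_norm hna
  have hγ : ‖γ₀‖ ^ (p - 1) = (p : ℝ)⁻¹ := by
    rw [hγ₀]; exact rpow_neg_one_div_sub_one_pow (Nat.cast_nonneg p) hp.two_le
  have hcong := norm_pow_sub_one_add_le hp.two_le hpnorm hγ hroot
  calc ‖γ₀ ^ ((p - 1) * (μ + 1)) - (-(p : K)) ^ (μ + 1)‖
      = ‖(γ₀ ^ (p - 1)) ^ (μ + 1) - (-(p : K)) ^ (μ + 1)‖ := by rw [pow_mul]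
    _ ≤ ((p : ℝ)⁻¹) ^ μ * ((p : ℝ) ^ 2)⁻¹ :=
        norm_pow_succ_sub_pow_succ_le (by rw [norm_pow, hγ]) (by rw [norm_neg, hpnorm])
          (by rwa [sub_neg_eq_add]) μ
    _ = ((p : ℝ) ^ (μ + 2))⁻¹ := by rw [inv_pow, ← mul_inv, ← pow_add]

/-- Scalar core of Lemma 5.7: for every `μ ≥ 0`,
`|γ₀^{(p−1)(μ+1)} − (−p)^{μ+1}| ≤ p^{−(μ+2)}`. -/
theorem stmt_12 (p : ℕ) (hp : p.Prime)
    (K : Type*) [NormedField K] [CompleteSpace K] [CharZero K]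
    (hna : ∀ x y : K, ‖x + y‖ ≤ max ‖x‖ ‖y‖)
    (hpnorm : ‖(p : K)‖ = ((p : ℝ))⁻¹)
    (γ₀ : K) (hγ₀ : ‖γ₀‖ = (p : ℝ) ^ (-(1 : ℝ) / ((p : ℝ) - 1)))
    (hroot : HasSum (fun i : ℕ => γ₀ ^ p ^ i / (p : K) ^ i) 0)
    (μ : ℕ) :
    ‖γ₀ ^ ((p - 1) * (μ + 1)) - (-(p : K)) ^ (μ + 1)‖ ≤ ((p : ℝ) ^ (μ + 2))⁻¹ :=
  stmt_12_general p hp K hna hpnorm γ₀ hγ₀ hroot μ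
end
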